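/- arXiv:1201.2560 — 4 statements merged into one kernel-verified Lean document; each statement's English description precedes it below -/
import Mathlib

section
/- The set S⁻ = {(s,t,u) ∈ ℝ³ : 0 < s < 1, 0 < u, u < t, t < 1 − u, (1−t)² − su > 0, t² − (1−s)u > 0, and (1−2s)(1−2t+tu−su) < 0} is not a connected subset of ℝ³ (with the subspace topology). -/
/-- The semialgebraic set S⁻ parametrizing realizations of the oriented matroid M⁻,
with coordinates (s, t, u) ∈ ℝ³. -/
def Sminus : Set (ℝ × ℝ × ℝ) :=
  {p | 0 < p.1 ∧ p.1 < 1 ∧ 0 < p.2.2 ∧ p.2.2 < p.2.1 ∧ p.2.1 < 1 - p.2.2 ∧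
    (1 - p.2.1) ^ 2 - p.1 * p.2.2 > 0 ∧ p.2.1 ^ 2 - (1 - p.1) * p.2.2 > 0 ∧
    (1 - 2 * p.1) * (1 - 2 * p.2.1 + p.2.1 * p.2.2 - p.1 * p.2.2) < 0}

/-- The set S⁻ is not a connected subset of ℝ³. -/
theorem Sminus_not_connected : ¬ IsPreconnected Sminus := by
  intro h
  have hU : IsOpen {p : ℝ × ℝ × ℝ | p.1 < 1/2} :=
    isOpen_lt continuous_fst continuous_const
  have hV : IsOpen {p : ℝ × ℝ × ℝ | 1/2 < p.1} :=
    isOpen_lt continuous_const continuous_fst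
  have hcov : Sminus ⊆ {p : ℝ × ℝ × ℝ | p.1 < 1/2} ∪ {p | 1/2 < p.1} := by
    rintro ⟨s, t, u⟩ hp
    have h8 := hp.2.2.2.2.2.2.2
    simp only [Set.mem_union, Set.mem_setOf_eq]
    rcases lt_trichotomy s (1/2) with h | h | h
    · exact Or.inl h
    · exfalso; simp only at h8; rw [h] at h8; norm_num at h8
    · exact Or.inr h
  have hA : ((0.4 : ℝ), (0.6 : ℝ), (0.1 : ℝ)) ∈ Sminus ∩ {p : ℝ × ℝ × ℝ | p.1 < 1/2} := by
    constructor
    · refine ⟨by norm_num, by norm_num, by norm_num, by norm_num, by norm_num,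
        by norm_num, by norm_num, by norm_num⟩
    · norm_num
  have hB : ((0.6 : ℝ), (0.4 : ℝ), (0.1 : ℝ)) ∈ Sminus ∩ {p : ℝ × ℝ × ℝ | 1/2 < p.1} := by
    constructor
    · refine ⟨by norm_num, by norm_num, by norm_num, by norm_num, by norm_num,
        by norm_num, by norm_num, by norm_num⟩
    · norm_num
  obtain ⟨⟨s, t, u⟩, _, h1, h2⟩ := h _ _ hU hV hcov ⟨_, hA⟩ ⟨_, hB⟩
  simp only [Set.mem_setOf_eq] at h1 h2
  linarith
end

section
/- The set S⁻ = {(s,t,u) ∈ ℝ³ : 0 < s < 1, 0 < u, u < t, t < 1 − u, (1−t)² − su > 0, t² − (1−s)u > 0, (1−2s)(1−2t+tu−su) < 0} equals the union A ∪ B, where A = {(s,t,u) ∈ ℝ³ : 0 < s < 1/2, 1/2 < t < 1, 0 < u < min{1−t, (1−t)²/s, (2t−1)/(t−s)}} and B = {(s,t,u) ∈ ℝ³ : 1/2 < s < 1, 0 < t < 1/2, 0 < u < min{t, t²/(1−s), (1−2t)/(s−t)}}. -/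
/-- The piece with 0 < s < 1/2 < t < 1. -/
def Apiece : Set (ℝ × ℝ × ℝ) :=
  {p | 0 < p.1 ∧ p.1 < 1/2 ∧ 1/2 < p.2.1 ∧ p.2.1 < 1 ∧ 0 < p.2.2 ∧
    p.2.2 < min (1 - p.2.1) (min ((1 - p.2.1) ^ 2 / p.1)
      ((2 * p.2.1 - 1) / (p.2.1 - p.1)))}

/-- The piece with 0 < t < 1/2 < s < 1. -/
def Bpiece : Set (ℝ × ℝ × ℝ) :=
  {p | 1/2 < p.1 ∧ p.1 < 1 ∧ 0 < p.2.1 ∧ p.2.1 < 1/2 ∧ 0 < p.2.2 ∧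
    p.2.2 < min p.2.1 (min (p.2.1 ^ 2 / (1 - p.1))
      ((1 - 2 * p.2.1) / (p.1 - p.2.1)))}

/-- Proposition 4 of the paper: S⁻ = A ∪ B. -/
theorem Sminus_eq_union : Sminus = Apiece ∪ Bpiece := by
  ext ⟨s, t, u⟩
  simp only [Sminus, Apiece, Bpiece, Set.mem_setOf_eq, Set.mem_union, lt_min_iff]
  constructor
  · rintro ⟨hs0, hs1, hu0, hut, htu, h1, h2, h3⟩
    rcases lt_trichotomy s (1/2) with hs | hs | hs
    · -- s < 1/2, show membership in A
      have ht : 1/2 < t := by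
        by_contra ht
        push_neg at ht
        have h4 : 1 - 2 * t + t * u - s * u < 0 := by
          by_contra h4
          push_neg at h4
          exact absurd h3 (not_lt.2 (mul_nonneg (by linarith) h4))
        rcases le_or_gt t s with hts | hst
        · nlinarith [mul_nonpos_of_nonneg_of_nonpos (by linarith : (0:ℝ) ≤ t - u)
            (by linarith : t - s ≤ 0),
            mul_pos (by linarith : (0:ℝ) < 1/2 - s) (by linarith : (0:ℝ) < 1/2 + s),
            mul_le_mul_of_nonneg_right hts hs0.le, sq_nonneg (1 - 2 * t)]
        · nlinarith [mul_pos hu0 (sub_pos.2 hst)]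
      have hts : s < t := lt_trans hs ht
      refine Or.inl ⟨hs0, hs, ht, by linarith, hu0, by linarith, ?_, ?_⟩
      · rw [lt_div_iff₀ hs0]; nlinarith
      · rw [lt_div_iff₀ (by linarith : (0:ℝ) < t - s)]; nlinarith
    · exfalso; rw [hs] at h3; norm_num at h3
    · -- s > 1/2, show membership in B
      have ht : t < 1/2 := by
        by_contra ht
        push_neg at ht
        have h4 : 0 < 1 - 2 * t + t * u - s * u := by
          by_contra h4
          push_neg at h4
          exact absurd h3 (not_lt.2 (by nlinarith))
        rcases le_or_gt s t with hst | hts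
        · nlinarith [mul_nonneg (by linarith : (0:ℝ) ≤ 1 - t - u)
            (by linarith : (0:ℝ) ≤ t - s),
            mul_pos (by linarith : (0:ℝ) < 1 - t) (by linarith : (0:ℝ) < 1 - s),
            sq_nonneg (1 - 2 * t)]
        · nlinarith [mul_pos hu0 (sub_pos.2 hts)]
      have hts : t < s := lt_trans ht hs
      refine Or.inr ⟨hs, hs1, by linarith, ht, hu0, hut, ?_, ?_⟩
      · rw [lt_div_iff₀ (by linarith : (0:ℝ) < 1 - s)]; nlinarith
      · rw [lt_div_iff₀ (by linarith : (0:ℝ) < s - t)]; nlinarith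
  · rintro (⟨hs0, hs, ht, ht1, hu0, hu1, hu2, hu3⟩ | ⟨hs, hs1, ht0, ht, hu0, hu1, hu2, hu3⟩)
    · rw [lt_div_iff₀ hs0] at hu2
      rw [lt_div_iff₀ (by linarith : (0:ℝ) < t - s)] at hu3
      refine ⟨hs0, by linarith, hu0, by linarith, by linarith, by nlinarith, ?_, ?_⟩
      · nlinarith [mul_pos hu0 (by linarith : (0:ℝ) < t - s),
          mul_nonneg hu0.le (by linarith : (0:ℝ) ≤ 1 - t),
          mul_pos (by linarith : (0:ℝ) < 1 - t) (by linarith : (0:ℝ) < t - s)]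
      · nlinarith [mul_pos hu0 (by linarith : (0:ℝ) < t - s)]
    · rw [lt_div_iff₀ (by linarith : (0:ℝ) < 1 - s)] at hu2
      rw [lt_div_iff₀ (by linarith : (0:ℝ) < s - t)] at hu3
      refine ⟨by linarith, hs1, hu0, hu1, by linarith, ?_, by nlinarith, ?_⟩
      · nlinarith [mul_pos hu0 (by linarith : (0:ℝ) < s - t),
          mul_nonneg hu0.le ht0.le,
          mul_pos ht0 (by linarith : (0:ℝ) < s - t)]
      · nlinarith [mul_pos hu0 (by linarith : (0:ℝ) < s - t)]
end

section
/- Let r ≥ 1 and let x₁, …, x_r, y₁, …, y_r be vectors in ℝ^r. Then det(x₁, x₂, …, x_r) · det(y₁, …, y_r) = Σ_{k=1}^{r} det(y_k, x₂, …, x_r) · det(y₁, …, y_{k−1}, x₁, y_{k+1}, …, y_r), where det(v₁, …, v_r) denotes the determinant of the r × r matrix with columns v₁, …, v_r. -/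
open Matrix in
private theorem gp_rows (r : ℕ) (hr : 1 ≤ r) (x y : Fin r → Fin r → ℝ) :
    (Matrix.of x).det * (Matrix.of y).det =
      ∑ k : Fin r,
        ((Matrix.of x).updateRow ⟨0, hr⟩ (y k)).det *
        ((Matrix.of y).updateRow k (x ⟨0, hr⟩)).det := by
  classical
  set z : Fin r := ⟨0, hr⟩
  set x₀ : Fin r → ℝ := x z with hx₀
  set c : Fin r → ℝ := Matrix.cramer (Matrix.of y)ᵀ x₀ with hc
  have hcram : ∀ k, c k = ((Matrix.of y).updateRow k x₀).det := fun k =>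
    Matrix.cramer_transpose_apply _ _ _
  have hmv : (Matrix.of y)ᵀ *ᵥ c = (Matrix.of y)ᵀ.det • x₀ := Matrix.mulVec_cramer _ _
  have hcomb : (∑ k, c k • y k) = (Matrix.of y).det • x₀ := by
    funext i
    have := congrFun hmv i
    simpa [Matrix.mulVec, dotProduct, Finset.sum_apply, mul_comm] using this
  have hlin : ((Matrix.of x).updateRow z (∑ k, c k • y k)).det
      = ∑ k, c k * ((Matrix.of x).updateRow z (y k)).det := by
    have h1 := (Matrix.detRowAlternating (R := ℝ) (n := Fin r)).map_update_sum
      Finset.univ z (fun k => c k • y k) (Matrix.of x)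
    exact h1.trans (Finset.sum_congr rfl fun k _ =>
      Matrix.det_updateRow_smul (Matrix.of x) z (c k) (y k))
  calc (Matrix.of x).det * (Matrix.of y).det
      = ((Matrix.of x).updateRow z ((Matrix.of y).det • x₀)).det := by
        rw [Matrix.det_updateRow_smul,
          show (Matrix.of x).updateRow z x₀ = Matrix.of x from Matrix.updateRow_eq_self _ _,
          mul_comm]
    _ = ∑ k, c k * ((Matrix.of x).updateRow z (y k)).det := by rw [← hcomb, hlin]
    _ = ∑ k, ((Matrix.of x).updateRow z (y k)).det * ((Matrix.of y).updateRow k x₀).det := by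
        refine Finset.sum_congr rfl fun k _ => ?_
        rw [hcram, mul_comm]

/-- The Grassmann–Plücker identity for determinants: here the determinant of the
matrix with columns `v 0, …, v (r-1)` is `Matrix.det (Matrix.of fun i j => v j i)`,
`Function.update x ⟨0, hr⟩ (y k)` replaces the first column `x₁` by `y k`, and
`Function.update y k (x ⟨0, hr⟩)` replaces the k-th column `y k` by `x₁`. -/
theorem grassmann_plucker (r : ℕ) (hr : 1 ≤ r) (x y : Fin r → Fin r → ℝ) :
    Matrix.det (Matrix.of fun i j => x j i) * Matrix.det (Matrix.of fun i j => y j i) =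
      ∑ k : Fin r,
        Matrix.det (Matrix.of fun i j => Function.update x ⟨0, hr⟩ (y k) j i) *
        Matrix.det (Matrix.of fun i j => Function.update y k (x ⟨0, hr⟩) j i) := by
  have htr : ∀ v : Fin r → Fin r → ℝ,
      Matrix.det (Matrix.of fun i j => v j i) = Matrix.det (Matrix.of v) := by
    intro v
    rw [← Matrix.det_transpose (Matrix.of v)]
    rfl
  have key := gp_rows r hr x y
  rw [htr x, htr y, key]
  refine Finset.sum_congr rfl fun k _ => ?_
  rw [htr (Function.update x ⟨0, hr⟩ (y k)), htr (Function.update y k (x ⟨0, hr⟩))]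
  rfl
end

section
/- Let r ≥ 1, let n ≥ 1, let X be a real r × n matrix with columns x₁, …, x_n, and define χ_X(i₁,…,i_r) = sgn det(x_{i₁}, …, x_{i_r}) for indices i₁,…,i_r ∈ {1,…,n}. Suppose i₁,…,i_r, j₁,…,j_r ∈ {1,…,n} are such that for every k ∈ {1,…,r}, χ_X(j_k, i₂, …, i_r) · χ_X(j₁, …, j_{k−1}, i₁, j_{k+1}, …, j_r) ≥ 0. Then χ_X(i₁, …, i_r) · χ_X(j₁, …, j_r) ≥ 0. -/
/-!
Cramer's rule gives `det B • a = ∑ₖ det (B with column k replaced by a) • bₖ` for the columns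
`bₖ` of `B`. Applying the linear functional `u ↦ det (A with column z replaced by u)` to this
identity with `a` the `z`-th column of `A` yields the Grassmann–Plücker relation
`det A * det B = ∑ₖ det (A[z ↦ bₖ]) * det (B[k ↦ a_z])`. Under the sign hypothesis every summand
is nonnegative, hence so is `det A * det B`, and its sign is `χ(i) χ(j)`.
-/

/-- The chirotope of a real r × n matrix `X`: the sign of the determinant of the
r × r matrix whose b-th column is the `i b`-th column of `X`. -/
noncomputable def chi {r n : ℕ} (X : Matrix (Fin r) (Fin n) ℝ)
    (i : Fin r → Fin n) : ℝ :=
  Real.sign (Matrix.det (X.submatrix id i))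

namespace Real

theorem sign_mul (a b : ℝ) : sign (a * b) = sign a * sign b := by
  rcases lt_trichotomy a 0 with ha | rfl | ha <;> rcases lt_trichotomy b 0 with hb | rfl | hb <;>
    simp [sign_of_pos, sign_of_neg, *, mul_pos_of_neg_of_neg, mul_neg_of_neg_of_pos,
      mul_neg_of_pos_of_neg]

theorem sign_nonneg_iff {r : ℝ} : 0 ≤ sign r ↔ 0 ≤ r := by
  rcases lt_trichotomy r 0 with hr | rfl | hr
  · simp [sign_of_neg hr, hr.not_ge]
  · simp
  · simp [sign_of_pos hr, hr.le]

end Real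

namespace Matrix

theorem submatrix_update_eq_updateCol {l m o n α : Type*} [DecidableEq n] (X : Matrix m o α)
    (f : l → m) (v : n → o) (k : n) (x : o) :
    X.submatrix f (Function.update v k x) = (X.submatrix f v).updateCol k fun a => X (f a) x := by
  ext a b
  rcases eq_or_ne b k with rfl | hb <;> simp [*]

variable {n R : Type*} [Fintype n] [DecidableEq n] [CommRing R]

theorem det_mul_det_eq_sum_det_updateCol (A B : Matrix n n R) (z : n) :
    A.det * B.det =
      ∑ k, (A.updateCol z fun a => B a k).det * (B.updateCol k fun a => A a z).det := by
  have hA : A.cramer (fun a => A a z) z = A.det := by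
    simp [cramer_row_self A _ z fun _ => rfl]
  have hB : B.det • (fun a => A a z) = ∑ k, B.cramer (fun a => A a z) k • fun a => B a k := by
    rw [← mulVec_cramer, mulVec_eq_sum]
    simp only [op_smul_eq_smul]
    rfl
  calc A.det * B.det = A.cramer (B.det • fun a => A a z) z := by
        rw [map_smul, Pi.smul_apply, hA, smul_eq_mul, mul_comm]
    _ = ∑ k, B.cramer (fun a => A a z) k * A.cramer (fun a => B a k) z := by
        simp only [hB, map_sum, map_smul, Finset.sum_apply, Pi.smul_apply, smul_eq_mul]
    _ = _ := by simp only [cramer_apply, mul_comm]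

end Matrix

/-- `Function.update i ⟨0, hr⟩ (j k)` is the tuple `(j_k, i₂, …, i_r)` and
`Function.update j k (i ⟨0, hr⟩)` is `(j₁, …, j_{k-1}, i₁, j_{k+1}, …, j_r)`. -/
theorem chirotope_grassmann_plucker_general (r n : ℕ) (hr : 1 ≤ r)
    (X : Matrix (Fin r) (Fin n) ℝ) (i j : Fin r → Fin n)
    (h : ∀ k : Fin r,
      0 ≤ chi X (Function.update i ⟨0, hr⟩ (j k)) *
        chi X (Function.update j k (i ⟨0, hr⟩))) :
    0 ≤ chi X i * chi X j := by
  simp only [chi, ← Real.sign_mul, Real.sign_nonneg_iff,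
    Matrix.submatrix_update_eq_updateCol] at h ⊢
  rw [Matrix.det_mul_det_eq_sum_det_updateCol _ _ ⟨0, hr⟩]
  exact Finset.sum_nonneg fun k _ => h k

/-- The third chirotope axiom (the Grassmann–Plücker sign condition) holds for the
chirotope of any real matrix: here `Function.update i ⟨0, hr⟩ (j k)` is the tuple
`(j_k, i₂, …, i_r)` and `Function.update j k (i ⟨0, hr⟩)` is the tuple
`(j₁, …, j_{k-1}, i₁, j_{k+1}, …, j_r)`. -/
theorem chirotope_grassmann_plucker (r n : ℕ) (hr : 1 ≤ r) (hn : 1 ≤ n)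
    (X : Matrix (Fin r) (Fin n) ℝ) (i j : Fin r → Fin n)
    (h : ∀ k : Fin r,
      0 ≤ chi X (Function.update i ⟨0, hr⟩ (j k)) *
        chi X (Function.update j k (i ⟨0, hr⟩))) :
    0 ≤ chi X i * chi X j :=
  chirotope_grassmann_plucker_general r n hr X i j h
end
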